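/- arXiv:2106.06495 — 6 statements merged into one kernel-verified Lean document; each statement's English description precedes it below -/
import Mathlib

section
/- Let α be a real number and define b_α(z) = ∫₀^z (1+t)^α dt on the unit disk. Then Re(1 + z b_α''(z)/b_α'(z)) = Re(1 + αz/(1+z)), and b_α satisfies Kaplan's close-to-convexity condition ∫_{θ₁}^{θ₂} Re(1 + z b_α''(z)/b_α'(z)) dθ > -π (for all 0 < r < 1 and θ₁ < θ₂, z = re^{iθ}) if and only if -3 ≤ α ≤ 1. -/
open Complex Metric Real
open Filter Topology

/-!
Along the segment `[0, z]` the integral defining `b_α` is `F z - F 0` for a primitive `F` of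
`(1 + z)^α` on the disk, so `b_α' = (1 + z)^α` and `1 + z b_α''/b_α' = 1 + α z/(1 + z)`.
On the circle `z = r e^{iθ}` we have `Re (z/(1 + z)) = d/dθ arg (1 + z)`, so Kaplan's integral
equals `θ₂ - θ₁ + α Δ`, where `Δ` is the increment of `arg (1 + z)`. Since `Re (z/(1 + z)) < 1/2`
and `|arg (1 + z)| < π/2`, we get `Δ ≤ (θ₂ - θ₁)/2` and `|Δ| < π`, which gives the bound `-π` for
`-3 ≤ α ≤ 1`. Conversely, for `r = cos ε` the point `1 + r e^{i(π - ε)} = sin ε · e^{i(π/2 - ε)}`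
has argument `π/2 - ε`, so `arg (1 + z)` jumps by almost `-π` across `θ = π`; the intervals
`[ε - π, π - ε]` (for `α < -3`) and `[π - ε, π + ε]` (for `α > 1`) violate the condition.
-/

theorem integral_mul_eq_sub_of_hasDerivAt_of_starConvex {s : Set ℂ} (hs : StarConvex ℝ 0 s)
    {f F : ℂ → ℂ} (hF : ∀ w ∈ s, HasDerivAt F (f w) w) (hf : ContinuousOn f s) {z : ℂ}
    (hz : z ∈ s) : ∫ t in (0:ℝ)..1, f (t * z) * z = F z - F 0 := by
  have hseg : ∀ t ∈ Set.uIcc (0:ℝ) 1, (t:ℂ) * z ∈ s := fun t ht => by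
    rw [Set.uIcc_of_le zero_le_one] at ht
    simpa [Complex.real_smul] using hs.smul_mem hz ht.1 ht.2
  have hline : ∀ t : ℝ, HasDerivAt (fun t : ℝ => (t:ℂ) * z) z t := fun t => by
    simpa using (hasDerivAt_id t).ofReal_comp.mul_const z
  have hderiv : ∀ t ∈ Set.uIcc (0:ℝ) 1,
      HasDerivAt (fun t : ℝ => F (t * z)) (f (t * z) * z) t :=
    fun t ht => (hF _ (hseg t ht)).comp t (hline t)
  have hint : IntervalIntegrable (fun t : ℝ => f (t * z) * z) MeasureTheory.volume 0 1 :=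
    ((hf.comp (by fun_prop) hseg).mul continuousOn_const).intervalIntegrable
  simpa using intervalIntegral.integral_eq_sub_of_hasDerivAt hderiv hint

section OneAddCpow

variable {z : ℂ}

theorem hasDerivAt_one_add_cpow (c : ℂ) (hz : z ∈ ball (0:ℂ) 1) :
    HasDerivAt (fun w => (1 + w) ^ c) (c * (1 + z) ^ (c - 1)) z := by
  have : 1 + z ∈ slitPlane := mem_slitPlane_of_norm_lt_one (by simpa using hz)
  simpa using ((hasDerivAt_id z).const_add 1).cpow_const this

theorem differentiableOn_one_add_cpow (c : ℂ) :
    DifferentiableOn ℂ (fun w : ℂ => (1 + w) ^ c) (ball 0 1) :=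
  fun _ hz => (hasDerivAt_one_add_cpow c hz).differentiableAt.differentiableWithinAt

variable {c : ℂ} {b : ℂ → ℂ} (hb : ∀ z ∈ ball (0:ℂ) 1, b z = ∫ t in (0:ℝ)..1, (1 + t * z) ^ c * z)
include hb

theorem deriv_eq_one_add_cpow (hz : z ∈ ball (0:ℂ) 1) : deriv b z = (1 + z) ^ c := by
  obtain ⟨F, hF⟩ := (differentiableOn_one_add_cpow c).isExactOn_ball
  have hb_eq : b =ᶠ[𝓝 z] fun w => F w - F 0 := by
    filter_upwards [isOpen_ball.mem_nhds hz] with w hw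
    rw [hb w hw]
    exact integral_mul_eq_sub_of_hasDerivAt_of_starConvex
      ((convex_ball 0 1).starConvex (mem_ball_self one_pos)) hF
      (differentiableOn_one_add_cpow c).continuousOn hw
  rw [hb_eq.deriv_eq]
  exact ((hF z hz).sub_const (F 0)).deriv

theorem deriv_deriv_eq_mul_one_add_cpow (hz : z ∈ ball (0:ℂ) 1) :
    deriv (deriv b) z = c * (1 + z) ^ (c - 1) := by
  have hb_eq : deriv b =ᶠ[𝓝 z] fun w => (1 + w) ^ c := by
    filter_upwards [isOpen_ball.mem_nhds hz] with w hw
    exact deriv_eq_one_add_cpow hb hw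
  rw [hb_eq.deriv_eq, (hasDerivAt_one_add_cpow c hz).deriv]

theorem one_add_mul_deriv_deriv_div_deriv (hz : z ∈ ball (0:ℂ) 1) :
    1 + z * deriv (deriv b) z / deriv b z = 1 + c * z / (1 + z) := by
  have hne : 1 + z ≠ 0 := slitPlane_ne_zero (mem_slitPlane_of_norm_lt_one (by simpa using hz))
  have hpow : (1 + z) ^ c ≠ 0 := by simp [cpow_eq_zero_iff, hne]
  rw [deriv_eq_one_add_cpow hb hz, deriv_deriv_eq_mul_one_add_cpow hb hz, cpow_sub _ _ hne,
    cpow_one]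
  field_simp

end OneAddCpow

theorem re_div_one_add_lt_half {z : ℂ} (hz : ‖z‖ < 1) : (z / (1 + z)).re < 1 / 2 := by
  have hpos : 0 < normSq (1 + z) :=
    normSq_pos.mpr (slitPlane_ne_zero (mem_slitPlane_of_norm_lt_one hz))
  have hsq : normSq z < 1 := by rw [← Complex.sq_norm]; nlinarith [norm_nonneg z]
  rw [div_re, ← add_div, div_lt_iff₀ hpos]
  simp only [normSq_apply, add_re, one_re, add_im, one_im] at hsq ⊢
  nlinarith

section CircleMap

variable {r : ℝ}

theorem one_add_circleMap_mem_slitPlane (hr : |r| < 1) (θ : ℝ) :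
    1 + circleMap 0 r θ ∈ slitPlane :=
  mem_slitPlane_of_norm_lt_one (by rwa [norm_circleMap_zero])

theorem abs_arg_one_add_circleMap_lt (hr : |r| < 1) (θ : ℝ) :
    |arg (1 + circleMap 0 r θ)| < π / 2 := by
  have hre := abs_re_le_norm (circleMap 0 r θ)
  rw [norm_circleMap_zero] at hre
  rw [abs_arg_lt_pi_div_two_iff, add_re, one_re]
  left
  linarith [neg_abs_le (circleMap 0 r θ).re]

theorem arg_one_add_circleMap_neg (hr : |r| < 1) (θ : ℝ) :
    arg (1 + circleMap 0 r (-θ)) = -arg (1 + circleMap 0 r θ) := by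
  have hconj : 1 + circleMap 0 r (-θ) = (starRingEnd ℂ) (1 + circleMap 0 r θ) := by
    simp [circleMap, ← exp_conj]
  rw [hconj, arg_conj, if_neg (slitPlane_arg_ne_pi (one_add_circleMap_mem_slitPlane hr θ))]

theorem arg_one_add_circleMap_cos_pi_sub {ε : ℝ} (h0 : 0 < ε) (hπ : ε < π) :
    arg (1 + circleMap 0 (Real.cos ε) (π - ε)) = π / 2 - ε := by
  have hid : 1 + circleMap 0 (Real.cos ε) (π - ε) = Real.sin ε * exp ((π / 2 - ε : ℝ) * I) := by
    rw [circleMap_zero, exp_mul_I, exp_mul_I, ← ofReal_cos, ← ofReal_sin, ← ofReal_cos,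
      ← ofReal_sin, Real.cos_pi_sub, Real.sin_pi_sub, Real.cos_pi_div_two_sub,
      Real.sin_pi_div_two_sub]
    push_cast
    linear_combination -Complex.sin_sq_add_cos_sq (ε:ℂ)
  rw [hid, arg_real_mul _ (sin_pos_of_pos_of_lt_pi h0 hπ), arg_exp_mul_I, toIocMod_eq_self]
  constructor <;> linarith

theorem hasDerivAt_arg_one_add_circleMap (hr : |r| < 1) (θ : ℝ) :
    HasDerivAt (fun θ => arg (1 + circleMap 0 r θ))
      ((circleMap 0 r θ / (1 + circleMap 0 r θ)).re) θ := by
  have hlog := ((hasDerivAt_circleMap 0 r θ).const_add 1).clog_real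
    (one_add_circleMap_mem_slitPlane hr θ)
  have := imCLM.hasFDerivAt.comp_hasDerivAt θ hlog
  simpa only [Function.comp_def, imCLM_apply, log_im, mul_div_right_comm, mul_I_im] using this

theorem arg_one_add_circleMap_sub_le (hr : |r| < 1) {θ₁ θ₂ : ℝ} (h : θ₁ ≤ θ₂) :
    arg (1 + circleMap 0 r θ₂) - arg (1 + circleMap 0 r θ₁) ≤ 1 / 2 * (θ₂ - θ₁) := by
  refine image_sub_le_mul_sub_of_deriv_le
    (fun θ => (hasDerivAt_arg_one_add_circleMap hr θ).differentiableAt) (fun θ => ?_) h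
  rw [(hasDerivAt_arg_one_add_circleMap hr θ).deriv]
  exact (re_div_one_add_lt_half (by rwa [norm_circleMap_zero])).le

theorem integral_re_one_add_mul_div_circleMap (α : ℝ) (hr : |r| < 1) (θ₁ θ₂ : ℝ) :
    ∫ θ in θ₁..θ₂, (1 + α * circleMap 0 r θ / (1 + circleMap 0 r θ)).re
      = θ₂ - θ₁ + α * (arg (1 + circleMap 0 r θ₂) - arg (1 + circleMap 0 r θ₁)) := by
  have hderiv : ∀ θ ∈ Set.uIcc θ₁ θ₂, HasDerivAt (fun θ => θ + α * arg (1 + circleMap 0 r θ))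
      ((1 + α * circleMap 0 r θ / (1 + circleMap 0 r θ)).re) θ := fun θ _ => by
    refine ((hasDerivAt_id' θ).add
      ((hasDerivAt_arg_one_add_circleMap hr θ).const_mul α)).congr_deriv ?_
    simp only [mul_div_assoc, add_re, one_re, re_ofReal_mul]
  have hcont : Continuous fun θ => (1 + α * circleMap 0 r θ / (1 + circleMap 0 r θ)).re :=
    continuous_re.comp (continuous_const.add ((continuous_const.mul (continuous_circleMap 0 r)).div
      (continuous_const.add (continuous_circleMap 0 r))
      fun θ => slitPlane_ne_zero (one_add_circleMap_mem_slitPlane hr θ)))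
  rw [intervalIntegral.integral_eq_sub_of_hasDerivAt hderiv (hcont.intervalIntegrable _ _)]
  ring

end CircleMap

section Kaplan

variable {α r θ₁ θ₂ : ℝ}

theorem neg_pi_lt_sub_add_mul_arg_sub (hα : -3 ≤ α) (hα' : α ≤ 1) (hr : |r| < 1)
    (hθ : θ₁ < θ₂) :
    -π < θ₂ - θ₁ + α * (arg (1 + circleMap 0 r θ₂) - arg (1 + circleMap 0 r θ₁)) := by
  have hle := arg_one_add_circleMap_sub_le hr hθ.le
  have h₁ := abs_lt.mp (abs_arg_one_add_circleMap_lt hr θ₁)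
  have h₂ := abs_lt.mp (abs_arg_one_add_circleMap_lt hr θ₂)
  set Δ := arg (1 + circleMap 0 r θ₂) - arg (1 + circleMap 0 r θ₁)
  rcases le_or_gt 0 Δ with hΔ | hΔ
  · nlinarith [mul_nonneg (by linarith : (0:ℝ) ≤ α + 3) hΔ]
  · nlinarith [mul_nonpos_of_nonneg_of_nonpos (by linarith : (0:ℝ) ≤ 1 - α) hΔ.le]

theorem exists_sub_add_mul_arg_sub_lt_neg_pi (hα : α < -3 ∨ 1 < α) :
    ∃ r θ₁ θ₂ : ℝ, 0 < r ∧ r < 1 ∧ θ₁ < θ₂ ∧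
      θ₂ - θ₁ + α * (arg (1 + circleMap 0 r θ₂) - arg (1 + circleMap 0 r θ₁)) < -π := by
  have hsmall : ∀ g : ℝ → ℝ, Continuous g → g 0 < -π → ∃ ε ∈ Set.Ioo 0 (π / 2), g ε < -π :=
    fun g hg h0 => ((show ∀ᶠ ε in 𝓝[>] (0:ℝ), ε ∈ Set.Ioo 0 (π / 2) from
      Ioo_mem_nhdsGT (by positivity)).and
      (nhdsWithin_le_nhds (hg.continuousAt.eventually_lt continuousAt_const h0))).exists
  have harg : ∀ ε ∈ Set.Ioo 0 (π / 2),
      0 < Real.cos ε ∧ Real.cos ε < 1 ∧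
      arg (1 + circleMap 0 (Real.cos ε) (π - ε)) = π / 2 - ε ∧
      arg (1 + circleMap 0 (Real.cos ε) (-(π - ε))) = -(π / 2 - ε) ∧
      arg (1 + circleMap 0 (Real.cos ε) (π + ε)) = -(π / 2 - ε) := by
    rintro ε ⟨h0, hπ⟩
    have hcos0 : 0 < Real.cos ε := cos_pos_of_mem_Ioo ⟨by linarith, hπ⟩
    have hcos1 : Real.cos ε < 1 := by
      simpa using cos_lt_cos_of_nonneg_of_le_pi le_rfl (by linarith) h0
    have hr : |Real.cos ε| < 1 := by rwa [abs_of_pos hcos0]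
    have hpi := arg_one_add_circleMap_cos_pi_sub h0 (by linarith)
    refine ⟨hcos0, hcos1, hpi, by rw [arg_one_add_circleMap_neg hr, hpi], ?_⟩
    rw [show π + ε = -(π - ε) + 2 * π by ring, periodic_circleMap, arg_one_add_circleMap_neg hr,
      hpi]
  rcases hα with hα | hα
  · obtain ⟨ε, hε, hlt⟩ := hsmall (fun ε => 2 * (π - ε) + α * (π - 2 * ε)) (by fun_prop)
      (by nlinarith [pi_pos])
    obtain ⟨h0, h1, hpi, hneg, -⟩ := harg ε hε
    refine ⟨Real.cos ε, -(π - ε), π - ε, h0, h1, by linarith [hε.2, pi_pos], ?_⟩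
    rw [hpi, hneg]
    linarith
  · obtain ⟨ε, hε, hlt⟩ := hsmall (fun ε => 2 * ε - α * (π - 2 * ε)) (by fun_prop)
      (by nlinarith [pi_pos])
    obtain ⟨h0, h1, hpi, -, hadd⟩ := harg ε hε
    refine ⟨Real.cos ε, π - ε, π + ε, h0, h1, by linarith [hε.1], ?_⟩
    rw [hpi, hadd]
    linarith

end Kaplan

def KaplanCondition (f : ℂ → ℂ) : Prop :=
  ∀ r : ℝ, 0 < r → r < 1 → ∀ θ₁ θ₂ : ℝ, θ₁ < θ₂ →
    -π < ∫ θ in θ₁..θ₂,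
      (1 + circleMap 0 r θ * deriv (deriv f) (circleMap 0 r θ) / deriv f (circleMap 0 r θ)).re

theorem kaplanCondition_iff {α : ℝ} {b : ℂ → ℂ}
    (hb : ∀ z ∈ ball (0:ℂ) 1, b z = ∫ t in (0:ℝ)..1, (1 + t * z) ^ (α : ℂ) * z) :
    KaplanCondition b ↔ -3 ≤ α ∧ α ≤ 1 := by
  have hK : ∀ r : ℝ, 0 < r → r < 1 → ∀ θ₁ θ₂ : ℝ,
      ∫ θ in θ₁..θ₂, (1 + circleMap 0 r θ * deriv (deriv b) (circleMap 0 r θ)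
        / deriv b (circleMap 0 r θ)).re
      = θ₂ - θ₁ + α * (arg (1 + circleMap 0 r θ₂) - arg (1 + circleMap 0 r θ₁)) := by
    intro r h0 h1 θ₁ θ₂
    have hr : |r| < 1 := by rwa [abs_of_pos h0]
    rw [← integral_re_one_add_mul_div_circleMap α hr]
    refine intervalIntegral.integral_congr fun θ _ => ?_
    rw [one_add_mul_deriv_deriv_div_deriv hb (mem_ball_zero_iff.mpr (by rwa [norm_circleMap_zero]))]
  constructor
  · intro h
    by_contra hα
    rw [not_and_or, not_le, not_le] at hα
    obtain ⟨r, θ₁, θ₂, h0, h1, hθ, hlt⟩ := exists_sub_add_mul_arg_sub_lt_neg_pi hα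
    have := h r h0 h1 θ₁ θ₂ hθ
    rw [hK r h0 h1] at this
    linarith
  · rintro ⟨hα, hα'⟩ r h0 h1 θ₁ θ₂ hθ
    rw [hK r h0 h1]
    exact neg_pi_lt_sub_add_mul_arg_sub hα hα' (by rwa [abs_of_pos h0]) hθ

/-- for `b_α(z) = ∫₀^z (1+t)^α dt` we have
`Re(1 + z b''/b') = Re(1 + αz/(1+z))`, and `b_α` satisfies Kaplan's condition
iff `-3 ≤ α ≤ 1`. -/
theorem stmt_1 (α : ℝ) (b : ℂ → ℂ)
    (hb : ∀ z ∈ ball (0:ℂ) 1,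
      b z = ∫ t in (0:ℝ)..1, ((1 + (t : ℂ) * z) ^ (α : ℂ)) * z) :
    (∀ z ∈ ball (0:ℂ) 1,
        (1 + z * deriv (deriv b) z / deriv b z).re
          = (1 + (α : ℂ) * z / (1 + z)).re)
    ∧
    ((∀ r : ℝ, 0 < r → r < 1 → ∀ θ₁ θ₂ : ℝ, θ₁ < θ₂ →
        -π < ∫ θ in θ₁..θ₂,
          (1 + ((r : ℂ) * Complex.exp (θ * Complex.I))
              * deriv (deriv b) ((r : ℂ) * Complex.exp (θ * Complex.I))
              / deriv b ((r : ℂ) * Complex.exp (θ * Complex.I))).re)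
      ↔ (-3 ≤ α ∧ α ≤ 1)) :=
  ⟨fun z hz => by rw [one_add_mul_deriv_deriv_div_deriv hb hz],
    by simpa only [KaplanCondition, circleMap_zero] using kaplanCondition_iff hb⟩
end

section
/- If f is a convex function on the unit disk, then Re(z f'(z)/f(z)) > 1/2 for all z in the unit disk (interpreting the value at z=0 as 1). -/
open Complex Metric

/-- The class 𝔉: analytic on the unit disk, `f 0 = 0`, `f' 0 = 1`, `f'` nonvanishing. -/
def Fclass (f : ℂ → ℂ) : Prop :=
  DifferentiableOn ℂ f (ball 0 1) ∧ f 0 = 0 ∧ deriv f 0 = 1 ∧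
    ∀ z ∈ ball (0:ℂ) 1, deriv f z ≠ 0

/-- Normalized convex functions: `Re (1 + z f''/f') > 0` on the unit disk. -/
def Kclass (f : ℂ → ℂ) : Prop :=
  Fclass f ∧ ∀ z ∈ ball (0:ℂ) 1, 0 < (1 + z * deriv (deriv f) z / deriv f z).re

/-!
Write `f z = z g z` with `g = dslope f 0` and put `w = g / f' - 1`. Then `z f'/f = 1 / (1 + w)`,
so the claim amounts to `‖w‖ < 1`; and since `f' ≠ 0`, `w` is holomorphic on the whole disk, with
`w 0 = 0`. Differentiating `f = z g` gives `(1 + w) (1 + z f''/f') = 1 - z w'`. If `‖w‖ < 1` failed,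
a point `z₀` of least modulus with `‖w z₀‖ = 1` exists, and Jack's lemma gives `z₀ w'(z₀) = k w(z₀)`
with `k ≥ 1`; the identity then forces `Re (1 + z₀ f''/f') = (1 - k)/2 ≤ 0`.
-/

open ComplexConjugate Set Filter

lemma half_lt_re_inv_of_norm_sub_one_lt_one {q : ℂ} (hq : ‖q - 1‖ < 1) : 1 / 2 < q⁻¹.re := by
  have hnorm : (q.re - 1) ^ 2 + q.im ^ 2 < 1 := by
    have h := (sq_lt_one_iff₀ (norm_nonneg _)).2 hq
    rw [Complex.sq_norm, normSq_apply] at h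
    simp only [sub_re, one_re, sub_im, one_im, sub_zero] at h
    nlinarith
  have hpos : 0 < normSq q := by rw [normSq_apply]; nlinarith
  rw [inv_re, lt_div_iff₀ hpos, normSq_apply]
  nlinarith

lemma re_nonpos_of_one_add_mul_eq {v E : ℂ} {k : ℝ} (hv : ‖v‖ = 1) (hk : 1 ≤ k)
    (h : (1 + v) * E = 1 - k * v) : E.re ≤ 0 := by
  have hv2 : v.re ^ 2 + v.im ^ 2 = 1 := by
    have h := congrArg (· ^ 2) hv
    simp only [Complex.sq_norm, normSq_apply] at h
    nlinarith
  have hre := congrArg Complex.re h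
  have him := congrArg Complex.im h
  simp only [mul_re, mul_im, add_re, add_im, one_re, one_im, sub_re, sub_im, ofReal_re,
    ofReal_im] at hre him
  -- `2 (1 + Re v) Re E = (1 - k) (1 + Re v)`, and `Re v = -1` would force `0 = 1 + k`
  have key : (1 + v.re) * (2 * E.re + k - 1) = 0 := by
    linear_combination (1 + v.re) * hre + v.im * him - (E.re + k) * hv2
  by_contra! hE
  have hv1 : 1 + v.re = 0 := by
    rcases mul_eq_zero.mp key with h1 | h1 <;> [exact h1; linarith]
  have hvim : v.im = 0 := by nlinarith
  simp only [hvim, hv1] at hre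
  nlinarith

lemma div_deriv_mul_one_add_eq_one_sub_mul_deriv {f g : ℂ → ℂ} {z : ℂ}
    (hfg : ∀ ζ, f ζ = ζ * g ζ) (hg : DifferentiableAt ℂ g z) (hf' : DifferentiableAt ℂ (deriv f) z) (hne : deriv f z ≠ 0) :
    g z / deriv f z * (1 + z * deriv (deriv f) z / deriv f z) =
      1 - z * deriv (fun ζ => g ζ / deriv f ζ) z := by
  have hderiv : deriv f z = g z + z * deriv g z := by
    rw [show f = fun ζ => ζ * g ζ from funext hfg]
    simpa using ((hasDerivAt_id' z).fun_mul hg.hasDerivAt).deriv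
  rw [(hg.hasDerivAt.fun_div hf'.hasDerivAt hne).deriv]
  field_simp
  linear_combination -deriv f z * hderiv

lemma exists_norm_eq_of_norm_lt_of_le {E F : Type*} [NormedAddCommGroup E] [NormedSpace ℝ E]
    [ProperSpace E] [SeminormedAddCommGroup F] {w : E → F} {z : E} {c : ℝ}
    (hw : ContinuousOn w (closedBall 0 ‖z‖)) (h0 : ‖w 0‖ < c) (hz : c ≤ ‖w z‖) :
    ∃ z₀, ‖z₀‖ ≤ ‖z‖ ∧ ‖w z₀‖ = c ∧ ∀ ζ, ‖ζ‖ ≤ ‖z₀‖ → ‖w ζ‖ ≤ c := by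
  set S := closedBall (0 : E) ‖z‖ ∩ (fun ζ => ‖w ζ‖) ⁻¹' Ici c
  have hS : IsCompact S := (isCompact_closedBall 0 ‖z‖).of_isClosed_subset
    (hw.norm.preimage_isClosed_of_isClosed isClosed_closedBall isClosed_Ici) inter_subset_left
  obtain ⟨z₀, ⟨hz₀z, hz₀c⟩, hmin⟩ :=
    hS.exists_isMinOn ⟨z, mem_closedBall_zero_iff.2 le_rfl, hz⟩ continuous_norm.continuousOn
  rw [mem_closedBall_zero_iff] at hz₀z
  have hlt : ∀ ζ ∈ ball (0 : E) ‖z₀‖, ‖w ζ‖ ≤ c := fun ζ hζ => by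
    rw [mem_ball_zero_iff] at hζ
    by_contra! hζc
    exact (hmin ⟨mem_closedBall_zero_iff.2 (hζ.le.trans hz₀z), hζc.le⟩).not_gt hζ
  have hz₀ : z₀ ≠ 0 := by rintro rfl; exact (h0.trans_le hz₀c).false
  have hle : ∀ ζ, ‖ζ‖ ≤ ‖z₀‖ → ‖w ζ‖ ≤ c := fun ζ hζ => by
    have hcl : closure (ball (0 : E) ‖z₀‖) = closedBall 0 ‖z₀‖ :=
      closure_ball 0 (norm_ne_zero_iff.2 hz₀)
    refine le_on_closure hlt ?_ continuousOn_const (hcl ▸ mem_closedBall_zero_iff.2 hζ)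
    exact hcl ▸ (hw.mono (closedBall_subset_closedBall hz₀z)).norm
  exact ⟨z₀, hz₀z, le_antisymm (hle z₀ le_rfl) hz₀c, hle⟩

lemma im_conj_mul_mul_deriv_eq_zero_of_isMaxOn {w : ℂ → ℂ} {z₀ : ℂ}
    (hw : DifferentiableAt ℂ w z₀) (hmax : IsMaxOn (‖w ·‖) (sphere 0 ‖z₀‖) z₀) :
    (conj (w z₀) * (z₀ * deriv w z₀)).im = 0 := by
  set γ : ℝ → ℂ := fun θ => z₀ * exp (θ * I)
  have hγ0 : γ 0 = z₀ := by simp [γ]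
  have hγ : HasDerivAt γ (z₀ * I) 0 := by
    simpa [γ] using ((hasDerivAt_id (0 : ℝ)).ofReal_comp.mul_const I).cexp.const_mul z₀
  have hF : HasDerivAt (fun θ => ‖w (γ θ)‖ ^ 2)
      (2 * inner ℝ (w z₀) (deriv w z₀ * (z₀ * I))) 0 := by
    have hw' : HasDerivAt w (deriv w z₀) (γ 0) := by rw [hγ0]; exact hw.hasDerivAt
    simpa only [Function.comp_apply, hγ0] using (hw'.comp 0 hγ).norm_sq
  have hloc : IsLocalMax (fun θ => ‖w (γ θ)‖ ^ 2) 0 := Eventually.of_forall fun θ => by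
    have hθ : γ θ ∈ sphere 0 ‖z₀‖ := by simp [γ, norm_exp_ofReal_mul_I]
    simp only [hγ0]
    gcongr
    exact hmax hθ
  have := hloc.hasDerivAt_eq_zero hF
  rw [Complex.inner] at this
  have hI : (deriv w z₀ * (z₀ * I) * conj (w z₀)).re =
      -(conj (w z₀) * (z₀ * deriv w z₀)).im := by
    simp only [mul_re, mul_im, I_re, I_im, conj_re, conj_im]; ring
  linarith

lemma sq_norm_le_re_conj_mul_mul_deriv {w : ℂ → ℂ} {z₀ : ℂ}
    (hw : DifferentiableOn ℂ w (ball 0 ‖z₀‖)) (hw₀ : DifferentiableAt ℂ w z₀) (h0 : w 0 = 0)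
    (hz₀ : z₀ ≠ 0) (hmax : ∀ ζ ∈ ball 0 ‖z₀‖, ‖w ζ‖ ≤ ‖w z₀‖) :
    ‖w z₀‖ ^ 2 ≤ (conj (w z₀) * (z₀ * deriv w z₀)).re := by
  set M := ‖w z₀‖
  have hρ : 0 < ‖z₀‖ := norm_pos_iff.2 hz₀
  have hschwarz : ∀ t ∈ Ico (0 : ℝ) 1, ‖w (t * z₀)‖ ≤ M * t := fun t ht => by
    have hmem : (t : ℂ) * z₀ ∈ ball 0 ‖z₀‖ := by
      rw [mem_ball_zero_iff, norm_mul, norm_real, Real.norm_of_nonneg ht.1]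
      nlinarith [ht.2]
    have := dist_le_div_mul_dist_of_mapsTo_ball hw (fun ζ hζ => by
      rw [h0, mem_closedBall_zero_iff]; exact hmax ζ hζ) hmem
    rw [h0, dist_zero_right, dist_zero_right, norm_mul, norm_real,
      Real.norm_of_nonneg ht.1] at this
    calc ‖w (t * z₀)‖ ≤ M / ‖z₀‖ * (t * ‖z₀‖) := this
      _ = M * t := by field_simp
  -- `φ ≤ 0 = φ 1` on `[0, 1]`, so `φ' 1 ≥ 0`
  set φ : ℝ → ℝ := fun t => ‖w (t * z₀)‖ ^ 2 - M ^ 2 * t ^ 2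
  have hφ1 : φ 1 = 0 := by simp [φ, M]
  have hφmax : IsMaxOn φ (Icc 0 1) 1 := isMaxOn_iff.2 fun t ht => by
    rw [hφ1]
    rcases ht.2.lt_or_eq with h1 | rfl
    · have := hschwarz t ⟨ht.1, h1⟩
      simp only [φ, sub_nonpos]
      nlinarith [norm_nonneg (w (t * z₀))]
    · exact hφ1.le
  have hline : HasDerivAt (fun t : ℝ => w (t * z₀)) (deriv w z₀ * z₀) 1 := by
    have hmul : HasDerivAt (fun t : ℝ => (t : ℂ) * z₀) z₀ 1 := by
      simpa using (hasDerivAt_id (1 : ℝ)).ofReal_comp.mul_const z₀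
    have hw₁ : HasDerivAt w (deriv w z₀) ((1 : ℝ) * z₀) := by simpa using hw₀.hasDerivAt
    exact hw₁.comp 1 hmul
  have hφ : HasDerivAt φ _ 1 :=
    hline.norm_sq.fun_sub ((hasDerivAt_pow 2 (1 : ℝ)).const_mul (M ^ 2))
  have hcone : (-1 : ℝ) ∈ posTangentConeAt (Icc 0 1) 1 :=
    mem_posTangentConeAt_of_segment_subset (by norm_num [segment_symm, segment_eq_Icc])
  have h := hφmax.localize.hasFDerivWithinAt_nonpos hφ.hasDerivWithinAt hcone
  simp only [ContinuousLinearMap.toSpanSingleton_apply, Complex.inner, smul_eq_mul, ofReal_one,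
    one_mul, one_pow, Nat.cast_ofNat, mul_one] at h
  rw [show deriv w z₀ * z₀ * conj (w z₀) = conj (w z₀) * (z₀ * deriv w z₀) by ring] at h
  linarith

-- Jack's lemma.
lemma exists_one_le_mul_deriv_eq_of_isMaxOn {w : ℂ → ℂ} {z₀ : ℂ}
    (hw : DifferentiableOn ℂ w (ball 0 ‖z₀‖)) (hw₀ : DifferentiableAt ℂ w z₀) (h0 : w 0 = 0)
    (hmax : IsMaxOn (‖w ·‖) (closedBall 0 ‖z₀‖) z₀) (hne : w z₀ ≠ 0) :
    ∃ k : ℝ, 1 ≤ k ∧ z₀ * deriv w z₀ = k * w z₀ := by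
  have hz₀ : z₀ ≠ 0 := by rintro rfl; exact hne h0
  set c := conj (w z₀) * (z₀ * deriv w z₀) with hc
  have him : c.im = 0 :=
    im_conj_mul_mul_deriv_eq_zero_of_isMaxOn hw₀ (hmax.on_subset sphere_subset_closedBall)
  have hre : ‖w z₀‖ ^ 2 ≤ c.re := sq_norm_le_re_conj_mul_mul_deriv hw hw₀ h0 hz₀
    fun ζ hζ => hmax (ball_subset_closedBall hζ)
  have hM : 0 < ‖w z₀‖ ^ 2 := by positivity
  refine ⟨c.re / ‖w z₀‖ ^ 2, (one_le_div hM).2 hre, ?_⟩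
  have hcre : (c.re : ℂ) = c := by apply Complex.ext <;> simp [him]
  have hwc : w z₀ * conj (w z₀) = ((‖w z₀‖ ^ 2 : ℝ) : ℂ) := by
    rw [mul_conj, normSq_eq_norm_sq]
  rw [ofReal_div, hcre, div_mul_eq_mul_div, eq_div_iff (by exact_mod_cast hM.ne'), hc]
  linear_combination -(z₀ * deriv w z₀) * hwc

theorem Kclass.norm_dslope_div_deriv_sub_one_lt_one {f : ℂ → ℂ} (hf : Kclass f) {z : ℂ}
    (hz : z ∈ ball (0 : ℂ) 1) : ‖dslope f 0 z / deriv f z - 1‖ < 1 := by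
  obtain ⟨⟨hd, hf0, hd0, hdne⟩, hconv⟩ := hf
  have hg : DifferentiableOn ℂ (dslope f 0) (ball 0 1) :=
    (differentiableOn_dslope (isOpen_ball.mem_nhds (mem_ball_self one_pos))).2 hd
  have hf' : DifferentiableOn ℂ (deriv f) (ball 0 1) :=
    (hd.analyticOnNhd isOpen_ball).deriv.differentiableOn
  set w : ℂ → ℂ := fun ζ => dslope f 0 ζ / deriv f ζ - 1
  have hw : DifferentiableOn ℂ w (ball 0 1) := (hg.div hf' hdne).sub_const 1
  have hw0 : w 0 = 0 := by simp [w, dslope_same, hd0]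
  by_contra! hz1
  have hsub : closedBall 0 ‖z‖ ⊆ ball (0 : ℂ) 1 :=
    closedBall_subset_ball (mem_ball_zero_iff.1 hz)
  obtain ⟨z₀, hz₀z, hwz₀, hle⟩ :=
    exists_norm_eq_of_norm_lt_of_le (hw.continuousOn.mono hsub) (by simp [hw0]) hz1
  have hz₀ : z₀ ∈ ball (0 : ℂ) 1 := hsub (mem_closedBall_zero_iff.2 hz₀z)
  obtain ⟨k, hk, hkw⟩ := exists_one_le_mul_deriv_eq_of_isMaxOn
    (hw.mono (ball_subset_ball (mem_ball_zero_iff.1 hz₀).le))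
    (hw.differentiableAt (isOpen_ball.mem_nhds hz₀)) hw0
    (fun ζ hζ => by simpa [hwz₀] using hle ζ (mem_closedBall_zero_iff.1 hζ))
    (norm_ne_zero_iff.1 (by simp [hwz₀]))
  have hid := div_deriv_mul_one_add_eq_one_sub_mul_deriv
    (fun ζ => by simpa [hf0] using (sub_smul_dslope f 0 ζ).symm)
    (hg.differentiableAt (isOpen_ball.mem_nhds hz₀))
    (hf'.differentiableAt (isOpen_ball.mem_nhds hz₀)) (hdne z₀ hz₀)
  have hdw : deriv w z₀ = deriv (fun ζ => dslope f 0 ζ / deriv f ζ) z₀ := deriv_sub_const 1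
  rw [← hdw, hkw, show dslope f 0 z₀ / deriv f z₀ = 1 + w z₀ by simp [w]] at hid
  exact (hconv z₀ hz₀).not_ge (re_nonpos_of_one_add_mul_eq hwz₀ hk hid)

/-- for convex `f`, `Re (z f'(z)/f(z)) > 1/2` on the unit disk
(the value at `z = 0` being interpreted as `1`). -/
theorem stmt_9 (f : ℂ → ℂ) (hf : Kclass f) :
    ∀ z ∈ ball (0:ℂ) 1,
      1 / 2 < (if z = 0 then 1 else (z * deriv f z / f z)).re := by
  intro z hz
  split_ifs with hz0
  · norm_num
  · have h := half_lt_re_inv_of_norm_sub_one_lt_one (hf.norm_dslope_div_deriv_sub_one_lt_one hz)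
    rwa [dslope_of_ne _ hz0, slope_def_field, hf.1.2.1, sub_zero, sub_zero, div_div,
      inv_div] at h
end

section
/- If f is a convex function on the unit disk, then for every 0 ≤ r < 1 and 0 ≤ θ₁ < θ₂ ≤ 2π, (θ₂ - θ₁)/2 < ∫_{θ₁}^{θ₂} Re(z f'(z)/f(z)) dθ ≤ π + (θ₂ - θ₁)/2 where z = r e^{iθ}. -/
/-
Write `z f'(z) / f(z) = 1 / (1 - ω(z))` with `ω(z) = 1 - f(z) / (z f'(z))`, which is holomorphic on
the disk with `ω(0) = 0`. Differentiating gives `(1 - ω) (1 + z f''/f') = 1 + z ω'`. If `|ω|` reached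
`1` somewhere in the disk, Jack's lemma at a point of maximal modulus on a smaller circle would give
`z ω' = k ω` with `k ≥ 1`, and then `Re (1 + z f''/f') ≤ 0` there, contradicting convexity. So
`|ω| < 1`, that is `Re (z f'/f) > 1/2` (Marx–Strohhäcker), which integrates to the lower bound. For the
upper bound, the mean value property gives `∫₀^{2π} Re (z f'/f) dθ = 2π`, and the integral over the
complementary arc is at least half its length.
-/

open Complex Metric Real

open ComplexConjugate MeasureTheory

namespace Complex

lemma half_lt_re_inv_one_sub {w : ℂ} (hw : ‖w‖ < 1) : 1 / 2 < ((1 - w)⁻¹).re := by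
  have hw2 : w.re ^ 2 + w.im ^ 2 < 1 := by
    nlinarith [sq_norm_sub_sq_re w, norm_nonneg w]
  rw [inv_re, normSq_apply]
  simp only [sub_re, one_re, sub_im, one_im]
  rw [lt_div_iff₀ (by nlinarith [sq_nonneg w.im])]
  nlinarith

lemma re_nonpos_of_one_sub_mul_eq {W q : ℂ} {k : ℝ} (hW : 1 ≤ ‖W‖) (hk : 1 ≤ k)
    (h : (1 - W) * q = 1 + k * W) : q.re ≤ 0 := by
  have hre := congrArg re h
  have him := congrArg im h
  simp only [mul_re, mul_im, sub_re, sub_im, one_re, one_im, add_re, add_im, ofReal_re,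
    ofReal_im] at hre him
  have hden : 0 < (1 - W.re) ^ 2 + W.im ^ 2 := by
    by_contra! hden
    have h1 : W.re = 1 := by nlinarith [sq_nonneg (1 - W.re), sq_nonneg W.im]
    have h2 : W.im = 0 := by nlinarith [sq_nonneg (1 - W.re), sq_nonneg W.im]
    rw [h1, h2] at hre
    linarith
  -- `h` multiplied by `conj (1 - W)`, real part
  have key : ((1 - W.re) ^ 2 + W.im ^ 2) * q.re
      = (1 - ‖W‖) * (1 + k * ‖W‖) + (k - 1) * (W.re - ‖W‖) := by
    linear_combination (1 - W.re) * hre - W.im * him + k * sq_norm_sub_sq_re W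
  have hrhs : (1 - ‖W‖) * (1 + k * ‖W‖) + (k - 1) * (W.re - ‖W‖) ≤ 0 := by
    nlinarith [mul_nonneg (sub_nonneg.2 hk) (sub_nonneg.2 (re_le_norm W)),
      mul_nonpos_of_nonpos_of_nonneg (sub_nonpos.2 hW) (by positivity : 0 ≤ 1 + k * ‖W‖)]
  by_contra! hq
  nlinarith [mul_pos hden hq]

/-- `‖w‖²` restricted to the circle through `z₀` is maximal at `z₀`, so its angular derivative
vanishes there. -/
lemma im_mul_deriv_mul_conj_eq_zero_of_isMaxOn_sphere {w : ℂ → ℂ} {z₀ : ℂ}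
    (hw : DifferentiableAt ℂ w z₀) (hmax : IsMaxOn (norm ∘ w) (sphere 0 ‖z₀‖) z₀) :
    (z₀ * deriv w z₀ * conj (w z₀)).im = 0 := by
  have hrot : HasDerivAt (fun s : ℂ => exp (s * I) * z₀) (I * z₀) 0 := by
    simpa using ((hasDerivAt_mul_const (x := (0 : ℂ)) I).cexp).mul_const z₀
  have hγ : HasDerivAt (fun θ : ℝ => w (exp (θ * I) * z₀)) (deriv w z₀ * (I * z₀)) 0 := by
    simpa using (hw.hasDerivAt.comp_of_eq (0 : ℂ) hrot (by simp)).comp_ofReal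
  have hloc : IsLocalMax (fun θ : ℝ => ‖w (exp (θ * I) * z₀)‖ ^ 2) 0 :=
    Filter.Eventually.of_forall fun θ => by
      have : ‖w (exp (θ * I) * z₀)‖ ≤ ‖w z₀‖ := hmax (by simp [norm_exp_ofReal_mul_I])
      simpa using pow_le_pow_left₀ (norm_nonneg _) this 2
  have := hloc.hasDerivAt_eq_zero hγ.norm_sq
  simp [mul_re, mul_im] at this ⊢
  linarith

/-- By the Schwarz lemma `‖w (t z₀)‖ ≤ t ‖w z₀‖` on `[0, 1]`, with equality at `t = 1`; compare the
derivatives at `t = 1` from the left. -/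
lemma sq_norm_le_re_mul_deriv_mul_conj_of_isMaxOn_closedBall {w : ℂ → ℂ} {z₀ : ℂ} {R : ℝ}
    (hw : DifferentiableOn ℂ w (ball 0 R)) (hz₀ : z₀ ∈ ball 0 R) (hw0 : w 0 = 0)
    (hmax : IsMaxOn (norm ∘ w) (closedBall 0 ‖z₀‖) z₀) :
    ‖w z₀‖ ^ 2 ≤ (z₀ * deriv w z₀ * conj (w z₀)).re := by
  rcases eq_or_ne z₀ 0 with rfl | hz₀0
  · simp [hw0]
  have hρ : 0 < ‖z₀‖ := norm_pos_iff.2 hz₀0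
  have hschwarz : ∀ t ∈ Set.Icc (0 : ℝ) 1, ‖w (t * z₀)‖ ≤ t * ‖w z₀‖ := by
    rintro t ⟨ht0, ht1⟩
    rcases ht1.eq_or_lt with rfl | ht1
    · simp
    have hmaps : Set.MapsTo w (ball 0 ‖z₀‖) (closedBall (w 0) ‖w z₀‖) := fun z hz => by
      simpa [hw0] using hmax (ball_subset_closedBall hz)
    have hmem : (t : ℂ) * z₀ ∈ ball 0 ‖z₀‖ := by
      simpa [abs_of_nonneg ht0] using mul_lt_of_lt_one_left hρ ht1
    have := dist_le_div_mul_dist_of_mapsTo_ball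
      (hw.mono (ball_subset_ball (mem_ball_zero_iff.1 hz₀).le)) hmaps hmem
    simp [hw0, abs_of_nonneg ht0] at this
    exact this.trans_eq (by field_simp)
  have hray : HasDerivAt (fun t : ℝ => w (t * z₀)) (deriv w z₀ * z₀) 1 := by
    have hd := (hw.differentiableAt (isOpen_ball.mem_nhds hz₀)).hasDerivAt
    simpa using (hd.comp_of_eq (1 : ℂ) (hasDerivAt_mul_const z₀) (by simp)).comp_ofReal
  have hφ := hray.norm_sq.fun_sub ((hasDerivAt_mul_const (x := (1 : ℝ)) ‖w z₀‖).fun_pow 2)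
  have hmaxφ : IsMaxOn (fun t : ℝ => ‖w (t * z₀)‖ ^ 2 - (t * ‖w z₀‖) ^ 2) (Set.Icc 0 1) 1 := by
    intro t ht
    simpa using pow_le_pow_left₀ (norm_nonneg _) (hschwarz t ht) 2
  have hseg : segment ℝ (1 : ℝ) (1 + -1) ⊆ Set.Icc 0 1 := by
    simp [segment_symm, segment_eq_Icc]
  have := hmaxφ.localize.hasFDerivWithinAt_nonpos hφ.hasFDerivAt.hasFDerivWithinAt
    (mem_posTangentConeAt_of_segment_subset hseg)
  simp [mul_re, mul_im] at this ⊢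
  linarith

theorem jack_lemma {w : ℂ → ℂ} {z₀ : ℂ} {R : ℝ}
    (hw : DifferentiableOn ℂ w (ball 0 R)) (hz₀ : z₀ ∈ ball 0 R) (hw0 : w 0 = 0)
    (hmax : IsMaxOn (norm ∘ w) (closedBall 0 ‖z₀‖) z₀) (hwz₀ : w z₀ ≠ 0) :
    ∃ k : ℝ, 1 ≤ k ∧ z₀ * deriv w z₀ = k * w z₀ := by
  set c := z₀ * deriv w z₀ * conj (w z₀) with hc_def
  have hre : ‖w z₀‖ ^ 2 ≤ c.re :=
    sq_norm_le_re_mul_deriv_mul_conj_of_isMaxOn_closedBall hw hz₀ hw0 hmax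
  have him : c.im = 0 :=
    im_mul_deriv_mul_conj_eq_zero_of_isMaxOn_sphere
      (hw.differentiableAt (isOpen_ball.mem_nhds hz₀)) (hmax.on_subset sphere_subset_closedBall)
  have hM : 0 < ‖w z₀‖ ^ 2 := by positivity
  refine ⟨c.re / ‖w z₀‖ ^ 2, (one_le_div hM).2 hre, ?_⟩
  have hc : (c.re : ℂ) = c := ext rfl (by simp [him])
  have hM' : (‖w z₀‖ : ℂ) ^ 2 ≠ 0 := by exact_mod_cast hM.ne'
  rw [ofReal_div, hc, hc_def, ofReal_pow, div_mul_eq_mul_div, eq_div_iff hM', mul_assoc,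
    mul_assoc (z₀ * deriv w z₀), conj_mul']
  ring

lemma integral_re_comp_circleMap {g : ℂ → ℂ} {c : ℂ} {r : ℝ}
    (hg : DifferentiableOn ℂ g (closedBall c |r|)) :
    ∫ θ in 0..2 * π, (g (circleMap c r θ)).re = 2 * π * (g c).re := by
  have h := reCLM.circleAverage_comp_comm
    (hg.continuousOn.mono sphere_subset_closedBall).circleIntegrable'
  rw [(hg.diffContOnCl_ball subset_rfl).circleAverage, circleAverage_def] at h
  simp at h
  field_simp at h
  simpa only [mul_comm π 2] using h

end Complex

lemma mul_lt_intervalIntegral_of_lt {H : ℝ → ℝ} {c a b : ℝ} (hH : Continuous H)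
    (hc : ∀ x, c < H x) (hab : a < b) : (b - a) * c < ∫ x in a..b, H x := by
  simpa using intervalIntegral.integral_lt_integral_of_continuousOn_of_le_of_exists_lt hab
    continuousOn_const hH.continuousOn (fun x _ => (hc x).le) ⟨a, ⟨le_rfl, hab.le⟩, hc a⟩

lemma intervalIntegral_le_of_periodic {H : ℝ → ℝ} {T c a b : ℝ} (hH : Continuous H)
    (hper : Function.Periodic H T) (hc : ∀ x, c ≤ H x) (hbT : b ≤ a + T) :
    ∫ x in a..b, H x ≤ (∫ x in 0..T, H x) - (a + T - b) * c := by
  have hsplit := intervalIntegral.integral_add_adjacent_intervals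
    (hH.intervalIntegrable (μ := volume) a b) (hH.intervalIntegrable b (a + T))
  have hrest : (a + T - b) * c ≤ ∫ x in b..a + T, H x := by
    simpa using intervalIntegral.integral_mono_on (μ := volume) hbT intervalIntegrable_const
      (hH.intervalIntegrable _ _) (fun x _ => hc x)
  rw [hper.intervalIntegral_add_eq a 0, zero_add] at hsplit
  linarith

/-- `ω(z) = 1 - f(z) / (z f'(z))`, written with `dslope` so that it is holomorphic at `0`. -/
noncomputable def convexOmega (f : ℂ → ℂ) (z : ℂ) : ℂ := 1 - dslope f 0 z / deriv f z

section ConvexOmega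

variable {f : ℂ → ℂ}

lemma convexOmega_zero (h : deriv f 0 ≠ 0) : convexOmega f 0 = 0 := by
  simp [convexOmega, h]

lemma convexOmega_of_ne_zero (h0 : f 0 = 0) {z : ℂ} (hz : z ≠ 0) :
    convexOmega f z = 1 - f z / (z * deriv f z) := by
  rw [convexOmega, dslope_of_ne _ hz, slope_def_field, h0, sub_zero, sub_zero, div_div]

lemma ite_eq_inv_one_sub_convexOmega (h0 : f 0 = 0) (hf'0 : deriv f 0 ≠ 0) (z : ℂ) :
    (if z = 0 then 1 else z * deriv f z / f z) = (1 - convexOmega f z)⁻¹ := by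
  split_ifs with hz
  · simp [hz, convexOmega_zero hf'0]
  · rw [convexOmega_of_ne_zero h0 hz, sub_sub_cancel, inv_div]

lemma differentiableOn_convexOmega (hd : DifferentiableOn ℂ f (ball 0 1))
    (hd' : ∀ z ∈ ball (0 : ℂ) 1, deriv f z ≠ 0) :
    DifferentiableOn ℂ (convexOmega f) (ball 0 1) := by
  have hds : DifferentiableOn ℂ (dslope f 0) (ball 0 1) :=
    (differentiableOn_dslope (isOpen_ball.mem_nhds (mem_ball_self one_pos))).2 hd
  exact (differentiableOn_const 1).sub
    (hds.div (hd.analyticOnNhd isOpen_ball).deriv.differentiableOn hd')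

lemma one_sub_convexOmega_mul_eq (hd : DifferentiableOn ℂ f (ball 0 1)) (h0 : f 0 = 0)
    {z : ℂ} (hz : z ∈ ball (0 : ℂ) 1) (hz0 : z ≠ 0) (hf'z : deriv f z ≠ 0) :
    (1 - convexOmega f z) * (1 + z * deriv (deriv f) z / deriv f z)
      = 1 + z * deriv (convexOmega f) z := by
  have hf := (hd.differentiableAt (isOpen_ball.mem_nhds hz)).hasDerivAt
  have hf' := ((hd.analyticOnNhd isOpen_ball).deriv.differentiableOn.differentiableAt
    (isOpen_ball.mem_nhds hz)).hasDerivAt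
  have hden : HasDerivAt (fun y => y * deriv f y) (deriv f z + z * deriv (deriv f) z) z := by
    simpa using (hasDerivAt_id' z).fun_mul hf'
  have hω : HasDerivAt (convexOmega f) (-((deriv f z * (z * deriv f z)
      - f z * (deriv f z + z * deriv (deriv f) z)) / (z * deriv f z) ^ 2)) z := by
    refine ((hf.div hden (mul_ne_zero hz0 hf'z)).const_sub 1).congr_of_eventuallyEq ?_
    filter_upwards [isOpen_compl_singleton.mem_nhds hz0] with y hy
    exact convexOmega_of_ne_zero h0 hy
  rw [hω.deriv, convexOmega_of_ne_zero h0 hz0]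
  field_simp
  ring

variable (hd : DifferentiableOn ℂ f (ball 0 1)) (h0 : f 0 = 0)
  (hd' : ∀ z ∈ ball (0 : ℂ) 1, deriv f z ≠ 0)
  (hK : ∀ z ∈ ball (0 : ℂ) 1, 0 < (1 + z * deriv (deriv f) z / deriv f z).re)
include hd h0 hd' hK

lemma norm_convexOmega_lt_one {z : ℂ} (hz : z ∈ ball (0 : ℂ) 1) : ‖convexOmega f z‖ < 1 := by
  by_contra! h1
  have hω := differentiableOn_convexOmega hd hd'
  have hω0 := convexOmega_zero (hd' 0 (mem_ball_self one_pos))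
  have hz0 : z ≠ 0 := by rintro rfl; norm_num [hω0] at h1
  have hρ : ‖z‖ ≠ 0 := norm_ne_zero_iff.2 hz0
  obtain ⟨z₁, hz₁, hmax⟩ := exists_mem_frontier_isMaxOn_norm isBounded_ball
    (nonempty_ball.2 (norm_pos_iff.2 hz0))
    (hω.diffContOnCl_ball (closedBall_subset_ball (mem_ball_zero_iff.1 hz)))
  rw [frontier_ball 0 hρ, mem_sphere_zero_iff_norm] at hz₁
  rw [closure_ball 0 hρ, ← hz₁] at hmax
  have hz₁mem : z₁ ∈ ball (0 : ℂ) 1 := mem_ball_zero_iff.2 (hz₁ ▸ mem_ball_zero_iff.1 hz)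
  have hz₁0 : z₁ ≠ 0 := norm_ne_zero_iff.1 (hz₁ ▸ hρ)
  have hW : 1 ≤ ‖convexOmega f z₁‖ := h1.trans (hmax (by simp [hz₁]))
  obtain ⟨k, hk, hjack⟩ := jack_lemma hω hz₁mem hω0 hmax (norm_pos_iff.1 (by linarith))
  have := re_nonpos_of_one_sub_mul_eq hW hk (by
    rw [one_sub_convexOmega_mul_eq hd h0 hz₁mem hz₁0 (hd' _ hz₁mem), hjack])
  exact (hK z₁ hz₁mem).not_ge this

lemma half_lt_re_inv_one_sub_convexOmega {z : ℂ} (hz : z ∈ ball (0 : ℂ) 1) :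
    1 / 2 < ((1 - convexOmega f z)⁻¹).re :=
  half_lt_re_inv_one_sub (norm_convexOmega_lt_one hd h0 hd' hK hz)

lemma differentiableOn_inv_one_sub_convexOmega :
    DifferentiableOn ℂ (fun z => (1 - convexOmega f z)⁻¹) (ball 0 1) :=
  ((differentiableOn_const 1).sub (differentiableOn_convexOmega hd hd')).inv fun z hz h => by
    have := norm_convexOmega_lt_one hd h0 hd' hK hz
    rw [← sub_eq_zero.1 h] at this
    simp at this

end ConvexOmega

/-- for convex `f`, `0 ≤ r < 1` and `0 ≤ θ₁ < θ₂ ≤ 2π`,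
`(θ₂ - θ₁)/2 < ∫_{θ₁}^{θ₂} Re (z f'(z)/f(z)) dθ ≤ π + (θ₂ - θ₁)/2` with `z = r e^{iθ}`
(the integrand being interpreted as `1` at `z = 0`). -/
theorem stmt_10 (f : ℂ → ℂ) (hf : Kclass f)
    (r : ℝ) (hr0 : 0 ≤ r) (hr1 : r < 1)
    (θ₁ θ₂ : ℝ) (h1 : 0 ≤ θ₁) (h12 : θ₁ < θ₂) (h2 : θ₂ ≤ 2 * π) :
    (θ₂ - θ₁) / 2 <
        (∫ θ in θ₁..θ₂,
          (if ((r : ℂ) * Complex.exp (θ * Complex.I)) = 0 then 1 else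
            (((r : ℂ) * Complex.exp (θ * Complex.I))
              * deriv f ((r : ℂ) * Complex.exp (θ * Complex.I))
              / f ((r : ℂ) * Complex.exp (θ * Complex.I)))).re)
      ∧
      (∫ θ in θ₁..θ₂,
          (if ((r : ℂ) * Complex.exp (θ * Complex.I)) = 0 then 1 else
            (((r : ℂ) * Complex.exp (θ * Complex.I))
              * deriv f ((r : ℂ) * Complex.exp (θ * Complex.I))
              / f ((r : ℂ) * Complex.exp (θ * Complex.I)))).re)
        ≤ π + (θ₂ - θ₁) / 2 := by
  obtain ⟨⟨hd, h0, -, hd'⟩, hK⟩ := hf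
  have hf'0 := hd' 0 (mem_ball_self one_pos)
  have hr : closedBall (0 : ℂ) |r| ⊆ ball 0 1 := closedBall_subset_ball (by rwa [abs_of_nonneg hr0])
  have hcircle : ∀ θ, circleMap 0 r θ ∈ closedBall (0 : ℂ) |r| :=
    fun θ => sphere_subset_closedBall (circleMap_mem_sphere' 0 r θ)
  set g : ℂ → ℂ := fun z => (1 - convexOmega f z)⁻¹
  have hg : DifferentiableOn ℂ g (closedBall 0 |r|) :=
    (differentiableOn_inv_one_sub_convexOmega hd h0 hd' hK).mono hr
  simp_rw [ite_eq_inv_one_sub_convexOmega h0 hf'0, ← circleMap_zero]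
  have hcont : Continuous fun θ => (g (circleMap 0 r θ)).re :=
    continuous_re.comp (hg.continuousOn.comp_continuous (continuous_circleMap 0 r) hcircle)
  have hgt : ∀ θ, 1 / 2 < (g (circleMap 0 r θ)).re := fun θ =>
    half_lt_re_inv_one_sub_convexOmega hd h0 hd' hK (hr (hcircle θ))
  have hmean : ∫ θ in 0..2 * π, (g (circleMap 0 r θ)).re = 2 * π := by
    rw [integral_re_comp_circleMap hg]
    simp [g, convexOmega_zero hf'0]
  have hlow := mul_lt_intervalIntegral_of_lt hcont hgt h12
  have hup := intervalIntegral_le_of_periodic hcont ((periodic_circleMap 0 r).comp fun z => (g z).re)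
    (fun θ => (hgt θ).le) (by linarith : θ₂ ≤ θ₁ + 2 * π)
  constructor <;> linarith
end

section
/- If f is a convex function on the unit disk, then for every 0 ≤ r < 1 and 0 ≤ θ₁ < θ₂ ≤ 2π, 0 < ∫_{θ₁}^{θ₂} Re(1 + z f''(z)/f'(z)) dθ ≤ 2π where z = r e^{iθ}. -/
open Complex Metric Real

/-! The integrand is the real part of `1 + z f''(z)/f'(z)`, which is holomorphic on the disk and
has positive real part by convexity. Hence the integral over `[θ₁, θ₂]` is positive and at most the
integral over `[0, 2π]`, which by the mean value property equals `2π · Re (1 + 0) = 2π`. -/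

open intervalIntegral

theorem differentiableOn_one_add_mul_deriv_deriv_div_deriv {f : ℂ → ℂ} {U : Set ℂ}
    (hU : IsOpen U) (hf : DifferentiableOn ℂ f U) (hf' : ∀ z ∈ U, deriv f z ≠ 0) :
    DifferentiableOn ℂ (fun z => 1 + z * deriv (deriv f) z / deriv f z) U :=
  have hd := hf.deriv hU
  (differentiableOn_const 1).add ((differentiableOn_id.mul (hd.deriv hU)).div hd hf')

section CircleMap

variable {F : ℂ → ℂ} {c : ℂ} {R r : ℝ}

theorem circleMap_mem_ball_of_abs_lt (hr : |r| < R) (θ : ℝ) : circleMap c r θ ∈ ball c R :=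
  sphere_subset_ball hr (circleMap_mem_sphere' c r θ)

theorem ContinuousOn.continuous_comp_circleMap (hF : ContinuousOn F (ball c R)) (hr : |r| < R) :
    Continuous fun θ => F (circleMap c r θ) :=
  hF.comp_continuous (continuous_circleMap c r) (circleMap_mem_ball_of_abs_lt hr)

theorem DifferentiableOn.integral_re_comp_circleMap (hF : DifferentiableOn ℂ F (ball c R))
    (hr : |r| < R) : ∫ θ in 0..2 * π, (F (circleMap c r θ)).re = 2 * π * (F c).re := by
  have hmean : circleAverage F c r = F c :=
    DiffContOnCl.circleAverage ⟨hF.mono (ball_subset_ball hr.le),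
      hF.continuousOn.mono (closure_ball_subset_closedBall.trans (closedBall_subset_ball hr))⟩
  have hint : CircleIntegrable F c r :=
    (hF.continuousOn.continuous_comp_circleMap hr).intervalIntegrable _ _
  have hre := reCLM.circleAverage_comp_comm hint
  rw [hmean, circleAverage_def, smul_eq_mul] at hre
  simp only [Function.comp_apply, reCLM_apply] at hre
  field_simp at hre
  linarith

end CircleMap

/-- for convex `f`, `0 ≤ r < 1` and `0 ≤ θ₁ < θ₂ ≤ 2π`,
`0 < ∫_{θ₁}^{θ₂} Re (1 + z f''(z)/f'(z)) dθ ≤ 2π` with `z = r e^{iθ}`. -/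
theorem stmt_11 (f : ℂ → ℂ) (hf : Kclass f)
    (r : ℝ) (hr0 : 0 ≤ r) (hr1 : r < 1)
    (θ₁ θ₂ : ℝ) (h1 : 0 ≤ θ₁) (h12 : θ₁ < θ₂) (h2 : θ₂ ≤ 2 * π) :
    0 <
        (∫ θ in θ₁..θ₂,
          (1 + ((r : ℂ) * Complex.exp (θ * Complex.I))
              * deriv (deriv f) ((r : ℂ) * Complex.exp (θ * Complex.I))
              / deriv f ((r : ℂ) * Complex.exp (θ * Complex.I))).re)
      ∧
      (∫ θ in θ₁..θ₂,
          (1 + ((r : ℂ) * Complex.exp (θ * Complex.I))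
              * deriv (deriv f) ((r : ℂ) * Complex.exp (θ * Complex.I))
              / deriv f ((r : ℂ) * Complex.exp (θ * Complex.I))).re)
        ≤ 2 * π := by
  obtain ⟨⟨hfd, -, -, hf'⟩, hconvex⟩ := hf
  have hr : |r| < 1 := abs_lt.2 ⟨by linarith, hr1⟩
  have hF := differentiableOn_one_add_mul_deriv_deriv_div_deriv isOpen_ball hfd hf'
  simp only [← circleMap_zero]
  have hpos (θ : ℝ) := hconvex _ (circleMap_mem_ball_of_abs_lt (c := 0) hr θ)
  have hint : ∀ a b : ℝ, IntervalIntegrable _ MeasureTheory.volume a b :=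
    (continuous_re.comp (hF.continuousOn.continuous_comp_circleMap hr)).intervalIntegrable
  have htotal := hF.integral_re_comp_circleMap hr
  simp only [zero_mul, zero_div, add_zero, one_re, mul_one] at htotal
  refine ⟨intervalIntegral_pos_of_pos (hint _ _) hpos h12, htotal ▸ ?_⟩
  exact integral_mono_interval h1 h12.le h2 (.of_forall fun θ => (hpos θ).le) (hint _ _)
end

section
/- If f ∈ 𝒢 (i.e., Re(1 + z f''(z)/f'(z)) < 3/2 on 𝔻 with f normalized), then 0 < Re(z f'(z)/f(z)) < 4/3 for all z in the unit disk. -/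
/-!
Put `h z = f z / (z f' z)`, so `h 0 = 1` and `z f'/f = 1/h`; it suffices to show `Re h > 3/4` on
the disk, since `1/h` then has real part in `(0, 4/3)`. Otherwise take a point `z₀` of least
modulus with `Re h z₀ = 3/4`. On `|z| ≤ |z₀|` we have `Re h ≥ 3/4`, so `ω = (2 - 2h)/(2h - 1)`
satisfies `ω 0 = 0` and `|ω| ≤ 1 = |ω z₀|`. Jack's lemma gives `z₀ ω'(z₀) = k ω(z₀)` with `k ≥ 1`,
i.e. `z₀ h'(z₀) = -k (2h - 1)(1 - h)`, which is real and `≤ -k/8` on `Re h = 3/4`. Since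
`1 + z f''/f' = (1 - z h')/h`, this forces `Re (1 + z₀ f''(z₀)/f'(z₀)) ≥ 3/2`, a contradiction.
-/

open Complex Metric

open Set Topology

theorem HasDerivAt.re_nonneg_and_im_eq_zero_of_isLocalMaxOn_re {Φ : ℂ → ℂ} {p : ℂ}
    (hΦ : HasDerivAt Φ p 0) (hmax : IsLocalMaxOn (fun s => (Φ s).re) {s | s.re ≤ 0} 0) :
    0 ≤ p.re ∧ p.im = 0 := by
  have hre : HasFDerivAt (fun s => (Φ s).re)
      (reCLM.comp (((1 : ℂ →L[ℂ] ℂ).smulRight p).restrictScalars ℝ)) 0 :=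
    reCLM.hasFDerivAt.comp 0 (hΦ.hasFDerivAt.restrictScalars ℝ)
  have hdir : ∀ v : ℂ, v.re ≤ 0 → (v * p).re ≤ 0 := fun v hv => by
    have hcone : v ∈ posTangentConeAt {s : ℂ | s.re ≤ 0} 0 :=
      mem_posTangentConeAt_of_segment_subset <|
        (convex_halfSpace_re_le 0).segment_subset (by simp) (by simpa using hv)
    simpa using hmax.hasFDerivWithinAt_nonpos hre.hasFDerivWithinAt hcone
  have h1 := hdir (-1) (by simp)
  have h2 := hdir I (by simp)
  have h3 := hdir (-I) (by simp)
  simp only [neg_mul, one_mul, neg_re, mul_re, I_re, I_im] at h1 h2 h3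
  constructor <;> linarith

/- `s ↦ G (z₀ exp s) / G z₀` has real part at most `1` on the left half-plane, with equality
at `s = 0`, and its derivative there is `z₀ G'(z₀) / G z₀`. -/
theorem exists_nonneg_mul_deriv_eq_of_isMaxOn_norm {G : ℂ → ℂ} {z₀ : ℂ}
    (hG : DifferentiableAt ℂ G z₀) (hz₀ : G z₀ ≠ 0)
    (hmax : IsMaxOn (‖G ·‖) (closedBall 0 ‖z₀‖) z₀) :
    ∃ m : ℝ, 0 ≤ m ∧ z₀ * deriv G z₀ = m * G z₀ := by
  set p := z₀ * deriv G z₀ / G z₀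
  have hΦ : HasDerivAt (fun s => G (z₀ * exp s) / G z₀) p 0 := by
    have hexp : HasDerivAt (fun s => z₀ * exp s) z₀ 0 := by
      simpa using (hasDerivAt_exp 0).const_mul z₀
    have hG' : HasDerivAt G (deriv G z₀) (z₀ * exp 0) := by simpa using hG.hasDerivAt
    simpa [p, mul_comm] using (hG'.comp 0 hexp).div_const (G z₀)
  have hmaxΦ : IsLocalMaxOn (fun s => (G (z₀ * exp s) / G z₀).re) {s | s.re ≤ 0} 0 := by
    refine IsMaxOn.localize fun s (hs : s.re ≤ 0) => ?_
    have hmem : z₀ * exp s ∈ closedBall 0 ‖z₀‖ := by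
      simpa [norm_exp] using mul_le_of_le_one_right (norm_nonneg z₀) (Real.exp_le_one_iff.mpr hs)
    calc (G (z₀ * exp s) / G z₀).re ≤ ‖G (z₀ * exp s) / G z₀‖ := re_le_norm _
      _ ≤ 1 := by rw [norm_div, div_le_one (norm_pos_iff.mpr hz₀)]; exact hmax hmem
      _ = (G (z₀ * exp 0) / G z₀).re := by simp [div_self hz₀]
  obtain ⟨hre, him⟩ := hΦ.re_nonneg_and_im_eq_zero_of_isLocalMaxOn_re hmaxΦ
  refine ⟨p.re, hre, ?_⟩
  rw [show (p.re : ℂ) = p from Complex.ext (by simp) (by simp [him])]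
  simp only [p, div_mul_cancel₀ _ hz₀]

/- Jack's lemma. By the maximum principle `|ω z / z|` is also maximal at `z₀`, and
`z ω'/ω = 1 + z g'/g` for `g = ω / z`. -/
theorem exists_one_le_mul_deriv_eq_of_isMaxOn_norm {ω : ℂ → ℂ} {z₀ : ℂ}
    (hω : ∀ z ∈ closedBall (0 : ℂ) ‖z₀‖, DifferentiableAt ℂ ω z) (hω0 : ω 0 = 0)
    (hz₀ : ω z₀ ≠ 0) (hmax : IsMaxOn (‖ω ·‖) (closedBall 0 ‖z₀‖) z₀) :
    ∃ k : ℝ, 1 ≤ k ∧ z₀ * deriv ω z₀ = k * ω z₀ := by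
  have hz₀0 : z₀ ≠ 0 := by rintro rfl; exact hz₀ hω0
  have hρ : ‖z₀‖ ≠ 0 := norm_ne_zero_iff.mpr hz₀0
  have hωg : ω = fun z => z * dslope ω 0 z := funext fun z => by
    simpa [hω0] using (sub_smul_dslope ω 0 z).symm
  have hg_sphere : ∀ z ∈ sphere (0 : ℂ) ‖z₀‖, ‖dslope ω 0 z‖ = ‖ω z‖ / ‖z₀‖ := fun z hz => by
    rw [mem_sphere_zero_iff_norm] at hz
    rw [dslope_of_ne _ (norm_ne_zero_iff.mp (hz ▸ hρ)), slope_def_field, hω0, sub_zero,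
      sub_zero, norm_div, hz]
  have hg_ball : DifferentiableOn ℂ (dslope ω 0) (ball 0 ‖z₀‖) :=
    (differentiableOn_dslope (ball_mem_nhds 0 (norm_pos_iff.mpr hz₀0))).mpr
      fun z hz => (hω z (ball_subset_closedBall hz)).differentiableWithinAt
  have hg : DiffContOnCl ℂ (dslope ω 0) (ball 0 ‖z₀‖) := by
    refine ⟨hg_ball, fun z hz => ?_⟩
    rw [closure_ball 0 hρ] at hz
    rcases eq_or_ne z 0 with rfl | hz0
    · exact (hg_ball.differentiableAt (ball_mem_nhds 0 (norm_pos_iff.mpr hz₀0))).continuousAt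
        |>.continuousWithinAt
    · exact ((continuousAt_dslope_of_ne hz0).mpr (hω z hz).continuousAt).continuousWithinAt
  have hgmax : IsMaxOn (‖dslope ω 0 ·‖) (closedBall 0 ‖z₀‖) z₀ := fun z hz => by
    rw [← closure_ball 0 hρ] at hz
    refine norm_le_of_forall_mem_frontier_norm_le isBounded_ball hg (fun w hw => ?_) hz
    rw [frontier_ball 0 hρ] at hw
    change ‖dslope ω 0 w‖ ≤ ‖dslope ω 0 z₀‖
    rw [hg_sphere w hw, hg_sphere z₀ (by simp)]
    gcongr
    exact hmax (sphere_subset_closedBall hw)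
  have hgz₀ : DifferentiableAt ℂ (dslope ω 0) z₀ :=
    (differentiableAt_dslope_of_ne hz₀0).mpr (hω z₀ (by simp))
  obtain ⟨m, hm, hgm⟩ := exists_nonneg_mul_deriv_eq_of_isMaxOn_norm hgz₀
    (fun h => hz₀ (by rw [hωg]; simp [h])) hgmax
  refine ⟨1 + m, by linarith, ?_⟩
  have hderiv : HasDerivAt ω (1 * dslope ω 0 z₀ + z₀ * deriv (dslope ω 0) z₀) z₀ :=
    ((hasDerivAt_id' z₀).mul hgz₀.hasDerivAt).congr_of_eventuallyEq
      (.of_forall fun z => congrFun hωg z)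
  rw [hderiv.deriv, congrFun hωg z₀]
  push_cast
  linear_combination z₀ * hgm

theorem two_mul_sub_one_ne_zero {w : ℂ} (hw : 3 / 4 ≤ w.re) : 2 * w - 1 ≠ 0 := fun h => by
  have := congrArg re h
  norm_num at this
  linarith

theorem normSq_two_sub_two_mul (w : ℂ) :
    normSq (2 - 2 * w) = normSq (2 * w - 1) + (3 - 4 * w.re) := by
  simp only [normSq_apply, sub_re, sub_im, mul_re, mul_im, re_ofNat, im_ofNat, one_re, one_im]
  ring

theorem norm_two_sub_two_mul_div_le_one {w : ℂ} (hw : 3 / 4 ≤ w.re) :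
    ‖(2 - 2 * w) / (2 * w - 1)‖ ≤ 1 := by
  rw [norm_div, div_le_one (norm_pos_iff.mpr (two_mul_sub_one_ne_zero hw)),
    ← sq_le_sq₀ (norm_nonneg _) (norm_nonneg _), ← normSq_eq_norm_sq, ← normSq_eq_norm_sq,
    normSq_two_sub_two_mul]
  linarith

theorem norm_two_sub_two_mul_div_eq_one {w : ℂ} (hw : w.re = 3 / 4) :
    ‖(2 - 2 * w) / (2 * w - 1)‖ = 1 := by
  rw [norm_div, div_eq_one_iff_eq (norm_ne_zero_iff.mpr (two_mul_sub_one_ne_zero hw.ge)),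
    ← sq_eq_sq₀ (norm_nonneg _) (norm_nonneg _), ← normSq_eq_norm_sq, ← normSq_eq_norm_sq,
    normSq_two_sub_two_mul, hw]
  ring

theorem exists_one_le_mul_deriv_eq_of_three_fourths_le_re {h : ℂ → ℂ} {z₀ : ℂ}
    (hh : ∀ z ∈ closedBall (0 : ℂ) ‖z₀‖, DifferentiableAt ℂ h z) (hh0 : h 0 = 1)
    (hmin : ∀ z ∈ closedBall (0 : ℂ) ‖z₀‖, 3 / 4 ≤ (h z).re) (hz₀ : (h z₀).re = 3 / 4) :
    ∃ k : ℝ, 1 ≤ k ∧ z₀ * deriv h z₀ = -k * (2 * h z₀ - 1) * (1 - h z₀) := by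
  set ω := fun z => (2 - 2 * h z) / (2 * h z - 1)
  have hω : ∀ z ∈ closedBall (0 : ℂ) ‖z₀‖, HasDerivAt ω
      ((-(2 * deriv h z) * (2 * h z - 1) - (2 - 2 * h z) * (2 * deriv h z)) /
        (2 * h z - 1) ^ 2) z :=
    fun z hz => (((hh z hz).hasDerivAt.const_mul 2).const_sub 2).div
      (((hh z hz).hasDerivAt.const_mul 2).sub_const 1) (two_mul_sub_one_ne_zero (hmin z hz))
  have hωz₀ : ‖ω z₀‖ = 1 := norm_two_sub_two_mul_div_eq_one hz₀
  obtain ⟨k, hk, hkeq⟩ := exists_one_le_mul_deriv_eq_of_isMaxOn_norm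
    (fun z hz => (hω z hz).differentiableAt) (by norm_num [ω, hh0])
    (norm_ne_zero_iff.mp (hωz₀.trans_ne one_ne_zero))
    (fun z hz => (norm_two_sub_two_mul_div_le_one (hmin z hz)).trans_eq hωz₀.symm)
  refine ⟨k, hk, ?_⟩
  rw [(hω z₀ (by simp)).deriv] at hkeq
  have := two_mul_sub_one_ne_zero hz₀.ge
  simp only [ω] at hkeq
  field_simp at hkeq
  linear_combination -hkeq

theorem exists_mem_ball_eq_and_le_on_closedBall {E : Type*} [NormedAddCommGroup E]
    [NormedSpace ℝ E] [ProperSpace E] {u : E → ℝ} {R c : ℝ} (hu : ContinuousOn u (ball 0 R))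
    (h0 : c < u 0) {z₁ : E} (hz₁ : z₁ ∈ ball 0 R) (hz₁c : u z₁ ≤ c) :
    ∃ z₀ ∈ ball (0 : E) R, u z₀ = c ∧ ∀ z ∈ closedBall (0 : E) ‖z₀‖, c ≤ u z := by
  have hsub : closedBall (0 : E) ‖z₁‖ ⊆ ball 0 R :=
    closedBall_subset_ball (mem_ball_zero_iff.mp hz₁)
  set S := closedBall (0 : E) ‖z₁‖ ∩ u ⁻¹' Iic c
  have hS : IsCompact S := (isCompact_closedBall 0 _).of_isClosed_subset
    ((hu.mono hsub).preimage_isClosed_of_isClosed isClosed_closedBall isClosed_Iic)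
    inter_subset_left
  obtain ⟨z₀, ⟨hz₀₁, hz₀c⟩, hz₀min⟩ :=
    hS.exists_isMinOn ⟨z₁, by simp, hz₁c⟩ continuous_norm.continuousOn
  have hρ : ‖z₀‖ ≠ 0 := norm_ne_zero_iff.mpr fun h => by subst h; exact h0.not_ge hz₀c
  have hcb : closedBall (0 : E) ‖z₀‖ ⊆ closedBall 0 ‖z₁‖ :=
    closedBall_subset_closedBall (mem_closedBall_zero_iff.mp hz₀₁)
  have hball : ball (0 : E) ‖z₀‖ ⊆ closedBall 0 ‖z₀‖ ∩ u ⁻¹' Ici c := fun z hz =>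
    ⟨ball_subset_closedBall hz, show c ≤ u z from le_of_not_ge fun hzc =>
      (mem_ball_zero_iff.mp hz).not_ge (hz₀min ⟨hcb (ball_subset_closedBall hz), hzc⟩)⟩
  have hge : ∀ z ∈ closedBall (0 : E) ‖z₀‖, c ≤ u z := fun z hz => by
    rw [← closure_ball 0 hρ] at hz
    exact (closure_minimal hball ((hu.mono (hcb.trans hsub)).preimage_isClosed_of_isClosed
      isClosed_closedBall isClosed_Ici) hz).2
  exact ⟨z₀, hsub hz₀₁, le_antisymm hz₀c (hge z₀ (by simp)), hge⟩

theorem mul_deriv_dslope_div_deriv {f : ℂ → ℂ} {z : ℂ} (hf0 : f 0 = 0) (hz : z ≠ 0)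
    (hf : DifferentiableAt ℂ f z) (hf' : DifferentiableAt ℂ (deriv f) z) (hne : deriv f z ≠ 0) :
    z * deriv (fun w => dslope f 0 w / deriv f w) z =
      1 - dslope f 0 z / deriv f z * (1 + z * deriv (deriv f) z / deriv f z) := by
  have heq : (fun w => dslope f 0 w / deriv f w) =ᶠ[𝓝 z] fun w => f w / (w * deriv f w) := by
    filter_upwards [isOpen_ne.mem_nhds hz] with w hw
    rw [dslope_of_ne f hw, slope_def_field, hf0, sub_zero, sub_zero, div_div]
  rw [heq.deriv_eq, heq.eq_of_nhds,
    (hf.hasDerivAt.fun_div ((hasDerivAt_id' z).fun_mul hf'.hasDerivAt) (mul_ne_zero hz hne)).deriv]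
  field_simp

theorem three_halves_le_re_of_mul_eq {w A : ℂ} {k : ℝ} (hw : w.re = 3 / 4) (hk : 1 ≤ k)
    (hA : w * A = 1 + k * (2 * w - 1) * (1 - w)) : 3 / 2 ≤ A.re := by
  have hre := congrArg re hA
  have him := congrArg im hA
  simp only [mul_re, mul_im, add_re, add_im, sub_re, sub_im, ofReal_re, ofReal_im, one_re,
    one_im, re_ofNat, im_ofNat, hw] at hre him
  ring_nf at hre him
  have hAim : A.im = -(4 / 3) * (w.im * A.re) := by linarith
  rw [hAim] at hre
  nlinarith [sq_nonneg w.im, mul_nonneg (sub_nonneg.mpr hk) (sq_nonneg w.im)]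

theorem re_inv_mem_Ioo_of_three_fourths_lt_re {w : ℂ} (hw : 3 / 4 < w.re) :
    0 < w⁻¹.re ∧ w⁻¹.re < 4 / 3 := by
  have hpos : 0 < normSq w := normSq_pos.mpr fun h => by simp [h] at hw; linarith
  rw [inv_re, div_pos_iff_of_pos_right hpos, div_lt_iff₀ hpos, normSq_apply]
  constructor
  · linarith
  · nlinarith [sq_nonneg w.im]

theorem three_fourths_lt_re_dslope_div_deriv {f : ℂ → ℂ} (hf : Fclass f)
    (hG : ∀ z ∈ ball (0 : ℂ) 1, (1 + z * deriv (deriv f) z / deriv f z).re < 3 / 2) :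
    ∀ z ∈ ball (0 : ℂ) 1, 3 / 4 < (dslope f 0 z / deriv f z).re := by
  obtain ⟨hdiff, hf0, hd0, hne⟩ := hf
  have hf' : DifferentiableOn ℂ (deriv f) (ball 0 1) :=
    (hdiff.analyticOnNhd isOpen_ball).deriv.differentiableOn
  set h := fun z => dslope f 0 z / deriv f z
  have hh : DifferentiableOn ℂ h (ball 0 1) :=
    ((differentiableOn_dslope (ball_mem_nhds 0 one_pos)).mpr hdiff).div hf' hne
  have hh0 : h 0 = 1 := by simp [h, hd0]
  by_contra! ⟨z₁, hz₁, hz₁c⟩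
  obtain ⟨z₀, hz₀, hz₀c, hmin⟩ := exists_mem_ball_eq_and_le_on_closedBall
    (continuous_re.comp_continuousOn hh.continuousOn) (by norm_num [hh0]) hz₁ hz₁c
  have hz₀0 : z₀ ≠ 0 := by rintro rfl; norm_num [hh0] at hz₀c
  have hcb : closedBall (0 : ℂ) ‖z₀‖ ⊆ ball 0 1 := closedBall_subset_ball (mem_ball_zero_iff.mp hz₀)
  obtain ⟨k, hk, hkeq⟩ := exists_one_le_mul_deriv_eq_of_three_fourths_le_re
    (fun z hz => hh.differentiableAt (isOpen_ball.mem_nhds (hcb hz))) hh0 hmin hz₀c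
  have hderiv : z₀ * deriv h z₀ = 1 - h z₀ * (1 + z₀ * deriv (deriv f) z₀ / deriv f z₀) :=
    mul_deriv_dslope_div_deriv hf0 hz₀0 (hdiff.differentiableAt (isOpen_ball.mem_nhds hz₀))
      (hf'.differentiableAt (isOpen_ball.mem_nhds hz₀)) (hne z₀ hz₀)
  exact (hG z₀ hz₀).not_ge (three_halves_le_re_of_mul_eq hz₀c hk
    (by linear_combination hderiv - hkeq))

/-- if `f ∈ 𝒢`, i.e. `Re (1 + z f''/f') < 3/2` on the unit disk, then
`0 < Re (z f'(z)/f(z)) < 4/3` there (the value at `z = 0` being interpreted as `1`). -/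
theorem stmt_15 (f : ℂ → ℂ) (hf : Fclass f)
    (hG : ∀ z ∈ ball (0:ℂ) 1,
      (1 + z * deriv (deriv f) z / deriv f z).re < 3 / 2) :
    ∀ z ∈ ball (0:ℂ) 1,
      0 < (if z = 0 then 1 else (z * deriv f z / f z)).re ∧
      (if z = 0 then 1 else (z * deriv f z / f z)).re < 4 / 3 := by
  intro z hz
  rcases eq_or_ne z 0 with rfl | hz0
  · norm_num
  · have hinv : z * deriv f z / f z = (dslope f 0 z / deriv f z)⁻¹ := by
      rw [dslope_of_ne f hz0, slope_def_field, hf.2.1, sub_zero, sub_zero, inv_div,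
        div_div_eq_mul_div, mul_comm]
    rw [if_neg hz0, hinv]
    exact re_inv_mem_Ioo_of_three_fourths_lt_re (three_fourths_lt_re_dslope_div_deriv hf hG z hz)
end

section
/- Let f(z) = [1-(1-z)²]/2 and g(z) = z/(1+z), and α, β real numbers with β ≥ 0 and α + β > 1. Then at the point z = 2/(α+β+1) ∈ (0,1), one has 1 + z C_{α,β}[f,g]''(z)/C_{α,β}[f,g]'(z) = (2-(1+α)z)/(2-z) - 2βz/(1+z) = -3β(α+β-1)/((α+β)(α+β+3)) < 0, whenever β > 0; hence C_{α,β}[f,g] is not convex. -/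
/-!
On the unit disc `f(w)/w = (2 - w)/2` and `g'(w) = (1 + w)⁻²`, so the integrand of `C` is the
holomorphic function `w ↦ ((2 - w)/2)^α ((1 + w)⁻²)^β` evaluated along the segment `[0, z]`.
Such an integral is a primitive, so `C'` is this function, whose logarithmic derivative is
`-α/(2 - w) - 2β/(1 + w)`. Hence `1 + zC''/C' = (2 - (1 + α)z)/(2 - z) - 2βz/(1 + z)`
throughout the disc, which at `z = 2/(α + β + 1)` is the negative number
`-3β(α + β - 1)/((α + β)(α + β + 3))`.
-/

open Complex Metric

theorem Complex.sq_mem_slitPlane_of_re_pos {w : ℂ} (hw : 0 < w.re) : w ^ 2 ∈ slitPlane := by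
  rw [mem_slitPlane_iff, sq, mul_re, mul_im]
  by_cases him : w.im = 0
  · left
    simp only [him, mul_zero, sub_zero]
    positivity
  · right
    intro h
    exact mul_ne_zero hw.ne' him (by linarith)

theorem Complex.inv_mem_slitPlane {z : ℂ} (hz : z ∈ slitPlane) : z⁻¹ ∈ slitPlane := by
  rw [mem_slitPlane_iff_arg] at hz ⊢
  refine ⟨?_, inv_ne_zero hz.2⟩
  rw [arg_inv, if_neg hz.1]
  linarith [neg_pi_lt_arg z]

theorem HasDerivAt.cpow_const_eq_mul {u : ℂ → ℂ} {u' c z : ℂ} (hu : HasDerivAt u u' z)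
    (h : u z ∈ slitPlane) : HasDerivAt (fun x => u x ^ c) (u z ^ c * (c * u' / u z)) z := by
  refine (hu.cpow_const h).congr_deriv ?_
  rw [cpow_sub _ _ (slitPlane_ne_zero h), cpow_one]
  ring

theorem Complex.ofReal_mul_mem_ball_zero {r t : ℝ} {w : ℂ} (ht : t ∈ Set.Icc (0 : ℝ) 1)
    (hw : w ∈ ball (0 : ℂ) r) : (t : ℂ) * w ∈ ball 0 r := by
  rw [mem_ball_zero_iff] at hw ⊢
  rw [norm_mul, norm_real, Real.norm_of_nonneg ht.1]
  nlinarith [norm_nonneg w, ht.2]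

theorem DifferentiableOn.hasDerivAt_integral_ofReal_mul_mul {F : ℂ → ℂ} {r : ℝ} {z : ℂ}
    (hF : DifferentiableOn ℂ F (ball 0 r)) (hz : z ∈ ball 0 r) :
    HasDerivAt (fun w => ∫ t in (0 : ℝ)..1, F (t * w) * w) (F z) z := by
  obtain ⟨G, hG0, hG⟩ := hF.isExactOn_ball.with_val_at 0 0
  have hseg : ∀ w ∈ ball (0 : ℂ) r, ∀ t ∈ Set.uIcc (0 : ℝ) 1, (t : ℂ) * w ∈ ball 0 r :=
    fun w hw t ht => ofReal_mul_mem_ball_zero (by rwa [Set.uIcc_of_le zero_le_one] at ht) hw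
  have hprimitive : ∀ w ∈ ball (0 : ℂ) r, ∫ t in (0 : ℝ)..1, F (t * w) * w = G w := by
    intro w hw
    have hderiv : ∀ t ∈ Set.uIcc (0 : ℝ) 1,
        HasDerivAt (fun s : ℝ => G (s * w)) (F (t * w) * w) t := fun t ht => by
      simpa using
        ((hG _ (hseg w hw t ht)).comp (t : ℂ) ((hasDerivAt_id _).mul_const w)).comp_ofReal
    have hint : IntervalIntegrable (fun t : ℝ => F (t * w) * w) MeasureTheory.volume 0 1 :=
      ((hF.continuousOn.comp (by fun_prop) (hseg w hw)).mul continuousOn_const).intervalIntegrable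
    rw [intervalIntegral.integral_eq_sub_of_hasDerivAt hderiv hint]
    simp [hG0]
  refine (hG z hz).congr_of_eventuallyEq ?_
  filter_upwards [isOpen_ball.mem_nhds hz] with w hw using hprimitive w hw

/-- `(f(w)/w)^α (g'(w))^β` for the two functions of the theorem, i.e. `C'`. -/
noncomputable def cDeriv (α β : ℝ) (w : ℂ) : ℂ :=
  ((2 - w) / 2) ^ (α : ℂ) * (((1 + w) ^ 2)⁻¹) ^ (β : ℂ)

theorem re_pos_of_mem_ball_zero_one {w : ℂ} (hw : w ∈ ball (0 : ℂ) 1) :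
    0 < (1 + w).re ∧ 0 < ((2 - w) / 2).re := by
  rw [mem_ball_zero_iff] at hw
  have := abs_lt.1 ((abs_re_le_norm w).trans_lt hw)
  simp only [add_re, one_re, div_ofNat_re, sub_re, re_ofNat]
  constructor <;> linarith

theorem ne_zero_of_mem_ball_zero_one {w : ℂ} (hw : w ∈ ball (0 : ℂ) 1) :
    1 + w ≠ 0 ∧ 2 - w ≠ 0 := by
  obtain ⟨h1, h2⟩ := re_pos_of_mem_ball_zero_one hw
  exact ⟨fun h => by simp [h] at h1, fun h => by simp [h] at h2⟩

theorem hasDerivAt_cDeriv (α β : ℝ) {w : ℂ} (hw : w ∈ ball (0 : ℂ) 1) :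
    HasDerivAt (cDeriv α β) (cDeriv α β w * (-α / (2 - w) - 2 * β / (1 + w))) w := by
  obtain ⟨h1, h2⟩ := re_pos_of_mem_ball_zero_one hw
  obtain ⟨h1', h2'⟩ := ne_zero_of_mem_ball_zero_one hw
  have hu := ((hasDerivAt_id w).const_sub 2).div_const 2
  have hv : HasDerivAt (fun x : ℂ => ((1 + x) ^ 2)⁻¹) (-(2 * (1 + w)) / ((1 + w) ^ 2) ^ 2) w := by
    simpa using (((hasDerivAt_id w).const_add 1).fun_pow 2).fun_inv (pow_ne_zero 2 h1')
  refine ((hu.cpow_const_eq_mul (c := α) (mem_slitPlane_iff.2 (Or.inl h2))).mul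
    (hv.cpow_const_eq_mul (c := β)
      (inv_mem_slitPlane (sq_mem_slitPlane_of_re_pos h1)))).congr_deriv ?_
  simp only [cDeriv, id]
  field_simp
  ring

theorem cDeriv_ne_zero (α β : ℝ) {w : ℂ} (hw : w ∈ ball (0 : ℂ) 1) : cDeriv α β w ≠ 0 := by
  obtain ⟨h1, h2⟩ := ne_zero_of_mem_ball_zero_one hw
  exact mul_ne_zero (by simp [cpow_eq_zero_iff, h2]) (by simp [cpow_eq_zero_iff, h1])

section Integral

variable {α β : ℝ} {f g C : ℂ → ℂ}

theorem integrand_eq_cDeriv (hfdef : ∀ z : ℂ, f z = (1 - (1 - z) ^ 2) / 2)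
    (hgdef : ∀ z : ℂ, g z = z / (1 + z)) {w : ℂ} (hw : w ∈ ball (0 : ℂ) 1) (hw0 : w ≠ 0) :
    (f w / w) ^ (α : ℂ) * (deriv g w) ^ (β : ℂ) = cDeriv α β w := by
  have h1 := (ne_zero_of_mem_ball_zero_one hw).1
  have hg : HasDerivAt g (((1 + w) ^ 2)⁻¹) w := by
    rw [funext hgdef]
    refine ((hasDerivAt_id w).div ((hasDerivAt_id w).const_add 1) h1).congr_deriv ?_
    simp only [id]
    field_simp
    ring
  rw [hg.deriv, hfdef, cDeriv]
  congr 2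
  field_simp
  ring

theorem hasDerivAt_of_eq_integral (hfdef : ∀ z : ℂ, f z = (1 - (1 - z) ^ 2) / 2)
    (hgdef : ∀ z : ℂ, g z = z / (1 + z))
    (hC : ∀ z ∈ ball (0 : ℂ) 1, C z = ∫ t in (0 : ℝ)..1,
      (f ((t : ℂ) * z) / ((t : ℂ) * z)) ^ (α : ℂ) * (deriv g ((t : ℂ) * z)) ^ (β : ℂ) * z)
    {z : ℂ} (hz : z ∈ ball (0 : ℂ) 1) : HasDerivAt C (cDeriv α β z) z := by
  have hCeq : ∀ w ∈ ball (0 : ℂ) 1, C w = ∫ t in (0 : ℝ)..1, cDeriv α β (t * w) * w := by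
    intro w hw
    rw [hC w hw]
    refine intervalIntegral.integral_congr_ae (.of_forall fun t ht => ?_)
    rw [Set.uIoc_of_le zero_le_one] at ht
    rcases eq_or_ne w 0 with rfl | hw0
    · simp
    rw [integrand_eq_cDeriv hfdef hgdef (ofReal_mul_mem_ball_zero (Set.Ioc_subset_Icc_self ht) hw)
      (mul_ne_zero (ofReal_ne_zero.2 ht.1.ne') hw0)]
  have hdiff : DifferentiableOn ℂ (cDeriv α β) (ball 0 1) :=
    fun _ hw => (hasDerivAt_cDeriv α β hw).differentiableAt.differentiableWithinAt
  refine (hdiff.hasDerivAt_integral_ofReal_mul_mul hz).congr_of_eventuallyEq ?_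
  filter_upwards [isOpen_ball.mem_nhds hz] with w hw using hCeq w hw

theorem one_add_mul_deriv_deriv_div_deriv_eq (hfdef : ∀ z : ℂ, f z = (1 - (1 - z) ^ 2) / 2)
    (hgdef : ∀ z : ℂ, g z = z / (1 + z))
    (hC : ∀ z ∈ ball (0 : ℂ) 1, C z = ∫ t in (0 : ℝ)..1,
      (f ((t : ℂ) * z) / ((t : ℂ) * z)) ^ (α : ℂ) * (deriv g ((t : ℂ) * z)) ^ (β : ℂ) * z)
    {z : ℂ} (hz : z ∈ ball (0 : ℂ) 1) :
    1 + z * deriv (deriv C) z / deriv C z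
      = (2 - (1 + (α : ℂ)) * z) / (2 - z) - 2 * (β : ℂ) * z / (1 + z) := by
  have hC' : deriv C =ᶠ[nhds z] cDeriv α β := by
    filter_upwards [isOpen_ball.mem_nhds hz] with w hw
    exact (hasDerivAt_of_eq_integral hfdef hgdef hC hw).deriv
  obtain ⟨h1, h2⟩ := ne_zero_of_mem_ball_zero_one hz
  rw [hC'.deriv_eq, hC'.eq_of_nhds, (hasDerivAt_cDeriv α β hz).deriv,
    mul_comm (cDeriv α β z), ← mul_assoc, mul_div_assoc, div_self (cDeriv_ne_zero α β hz)]
  field_simp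
  ring

end Integral

theorem convexity_quotient_at_two_div {α β : ℝ} (h : 0 < α + β) :
    (2 - (1 + α) * (2 / (α + β + 1))) / (2 - 2 / (α + β + 1))
        - 2 * β * (2 / (α + β + 1)) / (1 + 2 / (α + β + 1))
      = -3 * β * (α + β - 1) / ((α + β) * (α + β + 3)) := by
  have h1 : α + β + 1 ≠ 0 := by linarith
  have h3 : α + β + 3 ≠ 0 := by linarith
  have hsub : 2 - 2 / (α + β + 1) = 2 * (α + β) / (α + β + 1) := by field_simp; ring
  have hadd : 1 + 2 / (α + β + 1) = (α + β + 3) / (α + β + 1) := by field_simp; ring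
  rw [hsub, hadd]
  field_simp
  ring

/-- for `f(z) = (1-(1-z)²)/2`, `g(z) = z/(1+z)`, `β > 0` and `α + β > 1`,
at `z₀ = 2/(α+β+1) ∈ (0,1)` one has
`1 + z₀ C''/C' = (2-(1+α)z₀)/(2-z₀) - 2βz₀/(1+z₀) = -3β(α+β-1)/((α+β)(α+β+3)) < 0`;
hence `C_{α,β}[f,g]` is not convex. -/
theorem stmt_17 (α β : ℝ) (hβ : 0 < β) (hαβ : 1 < α + β)
    (f g : ℂ → ℂ)
    (hfdef : ∀ z : ℂ, f z = (1 - (1 - z) ^ 2) / 2)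
    (hgdef : ∀ z : ℂ, g z = z / (1 + z))
    (C : ℂ → ℂ)
    (hC : ∀ z ∈ ball (0:ℂ) 1,
      C z = ∫ t in (0:ℝ)..1,
        (f ((t : ℂ) * z) / ((t : ℂ) * z)) ^ (α : ℂ)
          * (deriv g ((t : ℂ) * z)) ^ (β : ℂ) * z) :
    (0 < 2 / (α + β + 1) ∧ 2 / (α + β + 1) < 1) ∧
    (1 + ((2 / (α + β + 1) : ℝ) : ℂ)
        * deriv (deriv C) ((2 / (α + β + 1) : ℝ) : ℂ)
        / deriv C ((2 / (α + β + 1) : ℝ) : ℂ)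
      = (2 - (1 + (α : ℂ)) * ((2 / (α + β + 1) : ℝ) : ℂ)) / (2 - ((2 / (α + β + 1) : ℝ) : ℂ))
        - 2 * (β : ℂ) * ((2 / (α + β + 1) : ℝ) : ℂ) / (1 + ((2 / (α + β + 1) : ℝ) : ℂ))) ∧
    (1 + ((2 / (α + β + 1) : ℝ) : ℂ)
        * deriv (deriv C) ((2 / (α + β + 1) : ℝ) : ℂ)
        / deriv C ((2 / (α + β + 1) : ℝ) : ℂ)
      = ((-3 * β * (α + β - 1) / ((α + β) * (α + β + 3)) : ℝ) : ℂ)) ∧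
    ((1 + ((2 / (α + β + 1) : ℝ) : ℂ)
        * deriv (deriv C) ((2 / (α + β + 1) : ℝ) : ℂ)
        / deriv C ((2 / (α + β + 1) : ℝ) : ℂ)).re < 0) ∧
    ¬ (∀ z ∈ ball (0:ℂ) 1, 0 < (1 + z * deriv (deriv C) z / deriv C z).re) := by
  set x : ℝ := 2 / (α + β + 1)
  have hx0 : 0 < x := div_pos two_pos (by linarith)
  have hx1 : x < 1 := (div_lt_one (by linarith)).2 (by linarith)
  have hxball : (x : ℂ) ∈ ball (0 : ℂ) 1 := by
    rwa [mem_ball_zero_iff, norm_real, Real.norm_of_nonneg hx0.le]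
  have hformula := one_add_mul_deriv_deriv_div_deriv_eq hfdef hgdef hC hxball
  have hvalue : 1 + x * deriv (deriv C) x / deriv C x
      = ((-3 * β * (α + β - 1) / ((α + β) * (α + β + 3)) : ℝ) : ℂ) := by
    rw [hformula]
    exact_mod_cast congrArg ((↑) : ℝ → ℂ) (convexity_quotient_at_two_div (by linarith))
  have hneg : -3 * β * (α + β - 1) / ((α + β) * (α + β + 3)) < 0 :=
    div_neg_of_neg_of_pos (by nlinarith) (mul_pos (by linarith) (by linarith))
  refine ⟨⟨hx0, hx1⟩, hformula, hvalue, by rwa [hvalue, ofReal_re], fun hconvex => ?_⟩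
  have := hconvex _ hxball
  rw [hvalue, ofReal_re] at this
  linarith
end
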